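/- (Derivative of a Greek generating function.) Let φ_t be a smooth family of diffeomorphisms of J¹ℝᵐ = ℝᵐ × ℝᵐ × ℝ generated by the time-dependent vector field X_t (i.e. ∂_t φ_t(w) = X_t(φ_t(w)) for all w), and let H_t : J¹ℝᵐ → ℝ be given by H_t = η(X_t), i.e. H_t(q,p,u) = (X_t(q,p,u))₃ − ⟨p, (X_t(q,p,u))₁⟩. Suppose Φ : ℝ × ℝᵐ × ℝᵐ × ℝ → ℝ and σ : ℝ × ℝᵐ × ℝᵐ × ℝ → ℝᵐ are smooth and satisfy, for all t, q, p, z: φ_t(q, p, z + ⟨p,q⟩) = (σ_t(q,p,z), ∂_QΦ_t(σ_t(q,p,z), p, z), Φ_t(σ_t(q,p,z), p, z)), where ∂_QΦ_t denotes the derivative of Φ_t in its first variable. Then for all t₀, q, p, z: ∂_tΦ_t(Q, p, z) evaluated at t = t₀ and Q = σ_{t₀}(q,p,z) equals H_{t₀}(φ_{t₀}(q, p, z + ⟨p,q⟩)). -/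

import Mathlib

noncomputable section

/-- J¹ℝᵐ = ℝᵐ × ℝᵐ × ℝ with coordinates (q, p, u). -/
abbrev Jm (m : ℕ) := (Fin m → ℝ) × (Fin m → ℝ) × ℝ

/-- Euclidean pairing ⟨x, y⟩ on ℝᵐ. -/
def dot {m : ℕ} (x y : Fin m → ℝ) : ℝ := ∑ i, x i * y i

/-- Derivative of a Greek generating function: if φ_t is a contact isotopy of J¹ℝᵐ generated by
the vector field X_t, with contact Hamiltonian H_t = η(X_t), and Φ_t is its Greek generating
function (with base-point map σ_t), then ∂_tΦ_t(Q,p,z) at t = t₀ and Q = σ_{t₀}(q,p,z) equals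
H_{t₀}(φ_{t₀}(q,p,z+⟨p,q⟩)). -/
theorem stmt_17 (m : ℕ)
    (φ : ℝ → Jm m → Jm m) (X : ℝ → Jm m → Jm m) (H : ℝ → Jm m → ℝ)
    (Φ : ℝ → Jm m → ℝ) (σ : ℝ → Jm m → (Fin m → ℝ))
    (hφsmooth : ContDiff ℝ (⊤ : ℕ∞) (Function.uncurry φ))
    (hφdiff : ∀ t, Function.Bijective (φ t))
    (hflow : ∀ (t : ℝ) (w : Jm m), HasDerivAt (fun s => φ s w) (X t (φ t w)) t)
    (hH : ∀ (t : ℝ) (w : Jm m), H t w = (X t w).2.2 - dot w.2.1 (X t w).1)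
    (hΦsmooth : ContDiff ℝ (⊤ : ℕ∞) (Function.uncurry Φ))
    (hσsmooth : ContDiff ℝ (⊤ : ℕ∞) (Function.uncurry σ))
    (hgreek : ∀ (t : ℝ) (q p : Fin m → ℝ) (z : ℝ),
      φ t (q, p, z + dot p q) =
        (σ t (q, p, z),
         fun i => fderiv ℝ (fun Q => Φ t (Q, p, z)) (σ t (q, p, z)) (Pi.single i 1),
         Φ t (σ t (q, p, z), p, z))) :
    ∀ (t₀ : ℝ) (q p : Fin m → ℝ) (z : ℝ),
      HasDerivAt (fun t => Φ t (σ t₀ (q, p, z), p, z))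
        (H t₀ (φ t₀ (q, p, z + dot p q))) t₀ := by
  intro t₀ q p z
  set w : Jm m := (q, p, z + dot p q) with hw
  set Q₀ : Fin m → ℝ := σ t₀ (q, p, z) with hQ₀
  set V : Jm m := X t₀ (φ t₀ w) with hV
  -- the map g(t,Q) = Φ t (Q,p,z) is smooth
  have hg : ContDiff ℝ (⊤ : ℕ∞) (fun x : ℝ × (Fin m → ℝ) => Φ x.1 (x.2, p, z)) := by
    exact hΦsmooth.comp (ContDiff.prodMk contDiff_fst (ContDiff.prodMk contDiff_snd
      (ContDiff.prodMk contDiff_const contDiff_const)))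
  set g : ℝ × (Fin m → ℝ) → ℝ := fun x => Φ x.1 (x.2, p, z) with hgdef
  set Dg : (ℝ × (Fin m → ℝ)) →L[ℝ] ℝ := fderiv ℝ g (t₀, Q₀) with hDg
  have hDgAt : HasFDerivAt g Dg (t₀, Q₀) :=
    (hg.differentiable (by simp) (t₀, Q₀)).hasFDerivAt
  -- derivative of σ in t
  have hσd : HasDerivAt (fun s => σ s (q, p, z)) V.1 t₀ := by
    have h1 : HasDerivAt (fun s => (φ s w).1) V.1 t₀ :=
      (ContinuousLinearMap.fst ℝ (Fin m → ℝ) ((Fin m → ℝ) × ℝ)).hasFDerivAt.comp_hasDerivAt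
        t₀ (hflow t₀ w)
    have : (fun s => (φ s w).1) = fun s => σ s (q, p, z) := by
      funext s; rw [hw, hgreek]
    rwa [this] at h1
  -- derivative of u-coordinate in t
  have hud : HasDerivAt (fun s => Φ s (σ s (q, p, z), p, z)) V.2.2 t₀ := by
    have h1 : HasDerivAt (fun s => (φ s w).2.2) V.2.2 t₀ :=
      ((ContinuousLinearMap.snd ℝ (Fin m → ℝ) ℝ).comp
        (ContinuousLinearMap.snd ℝ (Fin m → ℝ) ((Fin m → ℝ) × ℝ))).hasFDerivAt.comp_hasDerivAt
        t₀ (hflow t₀ w)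
    have : (fun s => (φ s w).2.2) = fun s => Φ s (σ s (q, p, z), p, z) := by
      funext s; rw [hw, hgreek]
    rwa [this] at h1
  -- chain rule along t ↦ (t, σ t)
  have hcomp : HasDerivAt (fun s => g (s, σ s (q, p, z))) (Dg (1, V.1)) t₀ := by
    have := (show HasFDerivAt g Dg (id t₀, σ t₀ (q, p, z)) from hDgAt).comp_hasDerivAt t₀
      ((hasDerivAt_id t₀).prodMk hσd)
    exact this
  have huniq : V.2.2 = Dg (1, V.1) := hud.unique hcomp
  -- the partial fderiv in Q
  have hpart : HasFDerivAt (fun Q => Φ t₀ (Q, p, z))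
      (Dg.comp ((0 : (Fin m → ℝ) →L[ℝ] ℝ).prod (ContinuousLinearMap.id ℝ (Fin m → ℝ)))) Q₀ := by
    have hin : HasFDerivAt (fun Q : Fin m → ℝ => ((t₀ : ℝ), Q))
        ((0 : (Fin m → ℝ) →L[ℝ] ℝ).prod (ContinuousLinearMap.id ℝ (Fin m → ℝ))) Q₀ :=
      (hasFDerivAt_const t₀ Q₀).prodMk (hasFDerivAt_id Q₀)
    exact hDgAt.comp Q₀ hin
  have hfd : ∀ v : Fin m → ℝ, fderiv ℝ (fun Q => Φ t₀ (Q, p, z)) Q₀ v = Dg (0, v) := by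
    intro v
    rw [hpart.fderiv]
    simp
  -- the target derivative
  have htarget : HasDerivAt (fun t => Φ t (Q₀, p, z)) (Dg (1, 0)) t₀ := by
    have := (show HasFDerivAt g Dg (id t₀, Q₀) from hDgAt).comp_hasDerivAt t₀
      ((hasDerivAt_id t₀).prodMk (hasDerivAt_const t₀ Q₀))
    exact this
  -- value computation
  have hP : (φ t₀ w).2.1 = fun i => Dg (0, Pi.single i 1) := by
    rw [hw, hgreek]
    funext i
    exact hfd (Pi.single i 1)
  have hdecomp : Dg (0, V.1) = dot (φ t₀ w).2.1 V.1 := by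
    rw [hP]
    have hv : ((0 : ℝ), V.1) = ∑ i, (V.1 i) • (((0 : ℝ), Pi.single i 1) : ℝ × (Fin m → ℝ)) := by
      ext
      · simp [Prod.fst_sum]
      · simp [Prod.snd_sum, Finset.sum_apply, Pi.single_apply, mul_comm]
    rw [hv, map_sum]
    simp only [dot, mul_comm]
    refine Finset.sum_congr rfl fun i _ => ?_
    rw [map_smul, smul_eq_mul]
  have hval : H t₀ (φ t₀ w) = Dg (1, 0) := by
    rw [hH]
    show V.2.2 - dot (φ t₀ w).2.1 V.1 = Dg (1, 0)
    rw [huniq, ← hdecomp, ← map_sub]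
    congr 1
    simp [Prod.ext_iff]
  rw [hval]
  exact htarget
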